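/- arXiv:1411.5430 — 7 statements merged into one kernel-verified Lean document; each statement's English description precedes it below -/
import Mathlib

section
/- (Lemma 1) Let Ω be a set, P a Perm algebra, Z a Zinbiel algebra, and A an Ω-algebra, all over a field k of characteristic zero. Equip P ⊗ A with the operations (p⊗a) ⊢_ω (q⊗b) = pq ⊗ (a ∘_ω b) and (p⊗a) ⊣_ω (q⊗b) = qp ⊗ (a ∘_ω b); equip Z ⊠ (P⊗A) := Z ⊗ (P ⊗ A) with the operations (z⊗d) ∘_ω (w⊗e) = zw ⊗ (d ⊢_ω e) + wz ⊗ (d ⊣_ω e); equip P ⊠ Z := P ⊗ Z with the product (p⊗z)(q⊗w) = pq ⊗ zw + qp ⊗ wz; and equip (P ⊠ Z) ⊗ A with the operations (x⊗a) ∘_ω (y⊗b) = xy ⊗ (a ∘_ω b). Then the k-linear equivalence Z ⊗ (P ⊗ A) → (P ⊗ Z) ⊗ A determined by z ⊗ (p ⊗ a) ↦ (p ⊗ z) ⊗ a is an isomorphism of Ω-algebras, i.e. it is bijective and preserves each operation ∘_ω. -/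
/-!
Both sides of `e (x ∘_ω y) = e x ∘_ω e y` are bilinear in `(x, y)`, so it suffices to compare
them on pure tensors `z ⊗ (p ⊗ a)`, `w ⊗ (q ⊗ b)`, where both equal
`(pq ⊗ zw + qp ⊗ wz) ⊗ (a ∘_ω b)`.
-/

open scoped TensorProduct

theorem TensorProduct.bilinear_ext_threefold' {R M N P M' N' P' Q : Type*} [CommSemiring R]
    [AddCommMonoid M] [AddCommMonoid N] [AddCommMonoid P] [AddCommMonoid M'] [AddCommMonoid N']
    [AddCommMonoid P'] [AddCommMonoid Q] [Module R M] [Module R N] [Module R P] [Module R M']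
    [Module R N'] [Module R P'] [Module R Q]
    {B₁ B₂ : M ⊗[R] (N ⊗[R] P) →ₗ[R] M' ⊗[R] (N' ⊗[R] P') →ₗ[R] Q}
    (H : ∀ x y z x' y' z',
      B₁ (x ⊗ₜ (y ⊗ₜ z)) (x' ⊗ₜ (y' ⊗ₜ z')) = B₂ (x ⊗ₜ (y ⊗ₜ z)) (x' ⊗ₜ (y' ⊗ₜ z'))) :
    B₁ = B₂ :=
  ext_threefold' fun x y z => ext_threefold' fun x' y' z' => H x y z x' y' z'

theorem stmt3_general {k : Type*} [Field k] {Ω : Type*}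
    {P : Type*} [NonUnitalRing P] [Module k P]
    {Z : Type*} [NonUnitalNonAssocRing Z] [Module k Z]
    {A : Type*} [AddCommGroup A] [Module k A]
    (mul : Ω → A →ₗ[k] A →ₗ[k] A)
    -- the dialgebra operations on `P ⊗ A`
    (vd dv : Ω → P ⊗[k] A →ₗ[k] P ⊗[k] A →ₗ[k] P ⊗[k] A)
    (hvd : ∀ (ω : Ω) (p q : P) (a b : A),
      vd ω (p ⊗ₜ[k] a) (q ⊗ₜ[k] b) = (p * q) ⊗ₜ[k] (mul ω a b))
    (hdv : ∀ (ω : Ω) (p q : P) (a b : A),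
      dv ω (p ⊗ₜ[k] a) (q ⊗ₜ[k] b) = (q * p) ⊗ₜ[k] (mul ω a b))
    -- the operations on `Z ⊠ (P ⊗ A)`
    (op1 : Ω → Z ⊗[k] (P ⊗[k] A) →ₗ[k] Z ⊗[k] (P ⊗[k] A) →ₗ[k] Z ⊗[k] (P ⊗[k] A))
    (hop1 : ∀ (ω : Ω) (z w : Z) (d e : P ⊗[k] A),
      op1 ω (z ⊗ₜ[k] d) (w ⊗ₜ[k] e) = (z * w) ⊗ₜ[k] (vd ω d e) + (w * z) ⊗ₜ[k] (dv ω d e))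
    -- the product on `P ⊠ Z`
    (mPZ : P ⊗[k] Z →ₗ[k] P ⊗[k] Z →ₗ[k] P ⊗[k] Z)
    (hmPZ : ∀ (p q : P) (z w : Z),
      mPZ (p ⊗ₜ[k] z) (q ⊗ₜ[k] w) = (p * q) ⊗ₜ[k] (z * w) + (q * p) ⊗ₜ[k] (w * z))
    -- the operations on `(P ⊠ Z) ⊗ A`
    (op2 : Ω → (P ⊗[k] Z) ⊗[k] A →ₗ[k] (P ⊗[k] Z) ⊗[k] A →ₗ[k] (P ⊗[k] Z) ⊗[k] A)
    (hop2 : ∀ (ω : Ω) (x y : P ⊗[k] Z) (a b : A),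
      op2 ω (x ⊗ₜ[k] a) (y ⊗ₜ[k] b) = (mPZ x y) ⊗ₜ[k] (mul ω a b))
    -- the linear equivalence determined by `z ⊗ (p ⊗ a) ↦ (p ⊗ z) ⊗ a`
    (e : Z ⊗[k] (P ⊗[k] A) ≃ₗ[k] (P ⊗[k] Z) ⊗[k] A)
    (he : ∀ (z : Z) (p : P) (a : A), e (z ⊗ₜ[k] (p ⊗ₜ[k] a)) = (p ⊗ₜ[k] z) ⊗ₜ[k] a) :
    Function.Bijective e ∧
      ∀ (ω : Ω) (x y : Z ⊗[k] (P ⊗[k] A)), e (op1 ω x y) = op2 ω (e x) (e y) := by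
  refine ⟨e.bijective, fun ω x y => ?_⟩
  have hom : (op1 ω).compr₂ (e : _ →ₗ[k] _) = (op2 ω).compl₁₂ (e : _ →ₗ[k] _) e :=
    TensorProduct.bilinear_ext_threefold' fun z p a w q b => by
      simp only [LinearMap.compr₂_apply, LinearMap.compl₁₂_apply, LinearEquiv.coe_coe]
      rw [hop1, hvd, hdv, map_add, he, he, he, he, hop2, hmPZ, TensorProduct.add_tmul]
  exact LinearMap.congr_fun₂ hom x y

/-- Lemma 1: For a Perm algebra `P`, a Zinbiel algebra `Z` and an `Ω`-algebra
`A` over a field `k` of characteristic zero, the `k`-linear equivalence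
`Z ⊗ (P ⊗ A) → (P ⊗ Z) ⊗ A`, `z ⊗ (p ⊗ a) ↦ (p ⊗ z) ⊗ a`, is an isomorphism of
`Ω`-algebras `Z ⊠ (P ⊗ A) ≅ (P ⊠ Z) ⊗ A`. -/
theorem stmt3 {k : Type*} [Field k] [CharZero k] {Ω : Type*}
    {P : Type*} [NonUnitalRing P] [Module k P] [SMulCommClass k P P] [IsScalarTower k P P]
    (hP : ∀ x y z : P, (x * y - y * x) * z = 0)
    {Z : Type*} [NonUnitalNonAssocRing Z] [Module k Z] [SMulCommClass k Z Z] [IsScalarTower k Z Z]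
    (hZ : ∀ x y z : Z, (x * y + y * x) * z = x * (y * z))
    {A : Type*} [AddCommGroup A] [Module k A]
    (mul : Ω → A →ₗ[k] A →ₗ[k] A)
    -- the dialgebra operations on `P ⊗ A`
    (vd dv : Ω → P ⊗[k] A →ₗ[k] P ⊗[k] A →ₗ[k] P ⊗[k] A)
    (hvd : ∀ (ω : Ω) (p q : P) (a b : A),
      vd ω (p ⊗ₜ[k] a) (q ⊗ₜ[k] b) = (p * q) ⊗ₜ[k] (mul ω a b))
    (hdv : ∀ (ω : Ω) (p q : P) (a b : A),
      dv ω (p ⊗ₜ[k] a) (q ⊗ₜ[k] b) = (q * p) ⊗ₜ[k] (mul ω a b))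
    -- the operations on `Z ⊠ (P ⊗ A)`
    (op1 : Ω → Z ⊗[k] (P ⊗[k] A) →ₗ[k] Z ⊗[k] (P ⊗[k] A) →ₗ[k] Z ⊗[k] (P ⊗[k] A))
    (hop1 : ∀ (ω : Ω) (z w : Z) (d e : P ⊗[k] A),
      op1 ω (z ⊗ₜ[k] d) (w ⊗ₜ[k] e) = (z * w) ⊗ₜ[k] (vd ω d e) + (w * z) ⊗ₜ[k] (dv ω d e))
    -- the product on `P ⊠ Z`
    (mPZ : P ⊗[k] Z →ₗ[k] P ⊗[k] Z →ₗ[k] P ⊗[k] Z)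
    (hmPZ : ∀ (p q : P) (z w : Z),
      mPZ (p ⊗ₜ[k] z) (q ⊗ₜ[k] w) = (p * q) ⊗ₜ[k] (z * w) + (q * p) ⊗ₜ[k] (w * z))
    -- the operations on `(P ⊠ Z) ⊗ A`
    (op2 : Ω → (P ⊗[k] Z) ⊗[k] A →ₗ[k] (P ⊗[k] Z) ⊗[k] A →ₗ[k] (P ⊗[k] Z) ⊗[k] A)
    (hop2 : ∀ (ω : Ω) (x y : P ⊗[k] Z) (a b : A),
      op2 ω (x ⊗ₜ[k] a) (y ⊗ₜ[k] b) = (mPZ x y) ⊗ₜ[k] (mul ω a b))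
    -- the linear equivalence determined by `z ⊗ (p ⊗ a) ↦ (p ⊗ z) ⊗ a`
    (e : Z ⊗[k] (P ⊗[k] A) ≃ₗ[k] (P ⊗[k] Z) ⊗[k] A)
    (he : ∀ (z : Z) (p : P) (a : A), e (z ⊗ₜ[k] (p ⊗ₜ[k] a)) = (p ⊗ₜ[k] z) ⊗ₜ[k] a) :
    Function.Bijective e ∧
      ∀ (ω : Ω) (x y : Z ⊗[k] (P ⊗[k] A)), e (op1 ω x y) = op2 ω (e x) (e y) :=
  stmt3_general mul vd dv hvd hdv op1 hop1 mPZ hmPZ op2 hop2 e he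
end

section
/- Let P be a Perm algebra and Z a Zinbiel algebra over a field k of characteristic zero. Then the tensor product P ⊗ Z equipped with the bilinear product (p⊗z)(q⊗w) = pq ⊗ zw + qp ⊗ wz is a commutative and associative (possibly nonunital) k-algebra. -/
/-!
Perm algebras and Zinbiel algebras both satisfy the left-commutativity identity
`x (y z) = y (x z)`, and Perm algebras moreover `x y z = y x z`. On pure tensors, both sides
of the associativity law expand into three terms, matched up by these identities together with
the Zinbiel law `(z w) v + (w z) v = z (w v)`; bilinearity extends this to all of `P ⊗ Z`.
-/

open scoped TensorProduct

def IsPermAlgebra (P : Type*) [NonUnitalRing P] : Prop :=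
  ∀ x y z : P, (x * y - y * x) * z = 0

def IsZinbielAlgebra (Z : Type*) [NonUnitalNonAssocSemiring Z] : Prop :=
  ∀ x y z : Z, (x * y + y * x) * z = x * (y * z)

namespace IsPermAlgebra

variable {P : Type*} [NonUnitalRing P] (hP : IsPermAlgebra P)
include hP

theorem mul_comm_mul (x y z : P) : x * y * z = y * x * z := by
  rw [← sub_eq_zero, ← sub_mul]
  exact hP x y z

theorem mul_left_comm (x y z : P) : x * (y * z) = y * (x * z) := by
  rw [← mul_assoc, hP.mul_comm_mul, mul_assoc]

end IsPermAlgebra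

theorem IsZinbielAlgebra.mul_left_comm {Z : Type*} [NonUnitalNonAssocSemiring Z]
    (hZ : IsZinbielAlgebra Z) (x y z : Z) : x * (y * z) = y * (x * z) := by
  rw [← hZ, ← hZ, add_comm]

namespace TensorProduct

variable {R M N X : Type*} [CommSemiring R] [AddCommMonoid M] [Module R M]
  [AddCommMonoid N] [Module R N] [AddCommMonoid X] [Module R X]

theorem bilinear_comm_of_tmul (m : M ⊗[R] N →ₗ[R] M ⊗[R] N →ₗ[R] X)
    (h : ∀ a c b d, m (a ⊗ₜ b) (c ⊗ₜ d) = m (c ⊗ₜ d) (a ⊗ₜ b)) (x y : M ⊗[R] N) :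
    m x y = m y x := by
  have hflip : m = m.flip := ext' fun a b => ext' fun c d => h a c b d
  exact LinearMap.congr_fun₂ hflip x y

theorem bilinear_assoc_of_tmul (m : M ⊗[R] N →ₗ[R] M ⊗[R] N →ₗ[R] M ⊗[R] N)
    (h : ∀ a c e b d f, m (m (a ⊗ₜ b) (c ⊗ₜ d)) (e ⊗ₜ f) = m (a ⊗ₜ b) (m (c ⊗ₜ d) (e ⊗ₜ f)))
    (x y z : M ⊗[R] N) : m (m x y) z = m x (m y z) := by
  induction x using TensorProduct.induction_on with
  | zero => simp
  | add x x' hx hx' => simp only [map_add, LinearMap.add_apply, hx, hx']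
  | tmul a b =>
    induction y using TensorProduct.induction_on with
    | zero => simp
    | add y y' hy hy' => simp only [map_add, LinearMap.add_apply, hy, hy']
    | tmul c d =>
      induction z using TensorProduct.induction_on with
      | zero => simp
      | add z z' hz hz' => simp only [map_add, hz, hz']
      | tmul e f => exact h a c e b d f

end TensorProduct

section PermZinbiel

variable {k : Type*} [CommSemiring k]
  {P : Type*} [NonUnitalRing P] [Module k P] (hP : IsPermAlgebra P)
  {Z : Type*} [NonUnitalNonAssocSemiring Z] [Module k Z] (hZ : IsZinbielAlgebra Z)
  {m : P ⊗[k] Z →ₗ[k] P ⊗[k] Z →ₗ[k] P ⊗[k] Z}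
  (hm : ∀ (p q : P) (z w : Z),
    m (p ⊗ₜ[k] z) (q ⊗ₜ[k] w) = (p * q) ⊗ₜ[k] (z * w) + (q * p) ⊗ₜ[k] (w * z))
include hP hZ hm

theorem perm_zinbiel_mul_tmul_left (p q r : P) (z w v : Z) :
    m (m (p ⊗ₜ z) (q ⊗ₜ w)) (r ⊗ₜ v) =
      (p * q * r) ⊗ₜ (z * (w * v)) + (p * (r * q)) ⊗ₜ (v * (z * w)) +
        (q * (r * p)) ⊗ₜ (v * (w * z)) := by
  rw [hm, map_add, LinearMap.add_apply, hm, hm, hP.mul_comm_mul q p, hP.mul_left_comm r p,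
    hP.mul_left_comm r q, ← hZ z w v, add_mul, TensorProduct.tmul_add]
  abel

theorem perm_zinbiel_mul_tmul_right (p q r : P) (z w v : Z) :
    m (p ⊗ₜ z) (m (q ⊗ₜ w) (r ⊗ₜ v)) =
      (p * q * r) ⊗ₜ (z * (w * v)) + (p * (r * q)) ⊗ₜ (z * (v * w)) +
        (q * (r * p)) ⊗ₜ (w * (v * z)) := by
  rw [hm, map_add, hm, hm, hP.mul_comm_mul r q, ← mul_assoc p q r, mul_assoc q r p,
    ← hZ w v z, add_mul, TensorProduct.tmul_add]
  abel

end PermZinbiel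

theorem stmt4_general {k : Type*} [Field k]
    {P : Type*} [NonUnitalRing P] [Module k P]
    (hP : ∀ x y z : P, (x * y - y * x) * z = 0)
    {Z : Type*} [NonUnitalNonAssocRing Z] [Module k Z]
    (hZ : ∀ x y z : Z, (x * y + y * x) * z = x * (y * z))
    (m : P ⊗[k] Z →ₗ[k] P ⊗[k] Z →ₗ[k] P ⊗[k] Z)
    (hm : ∀ (p q : P) (z w : Z),
      m (p ⊗ₜ[k] z) (q ⊗ₜ[k] w) = (p * q) ⊗ₜ[k] (z * w) + (q * p) ⊗ₜ[k] (w * z)) :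
    (∀ x y : P ⊗[k] Z, m x y = m y x) ∧
    (∀ x y z : P ⊗[k] Z, m (m x y) z = m x (m y z)) := by
  refine ⟨TensorProduct.bilinear_comm_of_tmul m fun p q z w => ?_,
    TensorProduct.bilinear_assoc_of_tmul m fun p q r z w v => ?_⟩
  · rw [hm, hm, add_comm]
  · rw [perm_zinbiel_mul_tmul_left hP hZ hm, perm_zinbiel_mul_tmul_right hP hZ hm,
      IsZinbielAlgebra.mul_left_comm hZ v z, IsZinbielAlgebra.mul_left_comm hZ v w]

/-- If `P` is a Perm algebra and `Z` a Zinbiel algebra over a field `k` of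
characteristic zero, then `P ⊗ Z` with the product
`(p⊗z)(q⊗w) = pq ⊗ zw + qp ⊗ wz` is commutative and associative. -/
theorem stmt4 {k : Type*} [Field k] [CharZero k]
    {P : Type*} [NonUnitalRing P] [Module k P] [SMulCommClass k P P] [IsScalarTower k P P]
    (hP : ∀ x y z : P, (x * y - y * x) * z = 0)
    {Z : Type*} [NonUnitalNonAssocRing Z] [Module k Z] [SMulCommClass k Z Z] [IsScalarTower k Z Z]
    (hZ : ∀ x y z : Z, (x * y + y * x) * z = x * (y * z))
    (m : P ⊗[k] Z →ₗ[k] P ⊗[k] Z →ₗ[k] P ⊗[k] Z)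
    (hm : ∀ (p q : P) (z w : Z),
      m (p ⊗ₜ[k] z) (q ⊗ₜ[k] w) = (p * q) ⊗ₜ[k] (z * w) + (q * p) ⊗ₜ[k] (w * z)) :
    (∀ x y : P ⊗[k] Z, m x y = m y x) ∧
    (∀ x y z : P ⊗[k] Z, m (m x y) z = m x (m y z)) :=
  stmt4_general hP hZ m hm
end

section
/- Let Z be a Zinbiel algebra over a field k of characteristic zero, let n ≥ 1, and let z₁, …, zₙ, z_{n+1} ∈ Z. Then for every permutation σ of {1,…,n}, the right-normed product r(z_{σ(1)}, …, z_{σ(n)}, z_{n+1}) equals r(z₁, …, zₙ, z_{n+1}); that is, the right-normed product is invariant under any permutation of all its factors except the last one. -/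
/-! Adding the Zinbiel identity to itself with `x` and `y` swapped shows that left multiplications
commute, `x(yt) = y(xt)`. A right-normed product is a right fold of left multiplications applied
to the last factor, so it does not depend on the order of the other factors. -/

/-- The right-normed product `r(z₁,…,zₙ,w) = z₁(z₂(⋯(zₙ w)⋯))` of the factors
`z 0, …, z (n-1)` followed by a last factor `w`. -/
def rprod {Z : Type*} [Mul Z] : {n : ℕ} → (Fin n → Z) → Z → Z
  | 0, _, w => w
  | _ + 1, z, w => z 0 * rprod (fun i => z i.succ) w

theorem rprod_eq_foldr {Z : Type*} [Mul Z] : ∀ {n : ℕ} (z : Fin n → Z) (w : Z),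
    rprod z w = (List.ofFn z).foldr (· * ·) w
  | 0, _, _ => rfl
  | n + 1, z, w => by
    rw [List.ofFn_succ, List.foldr_cons, rprod, rprod_eq_foldr]

theorem rprod_comp_perm {Z : Type*} [Mul Z] (hcomm : ∀ x y t : Z, x * (y * t) = y * (x * t))
    {n : ℕ} (z : Fin n → Z) (w : Z) (σ : Equiv.Perm (Fin n)) :
    rprod (z ∘ σ) w = rprod z w := by
  rw [rprod_eq_foldr, rprod_eq_foldr]
  exact @List.Perm.foldr_eq _ _ (· * ·) _ _ ⟨hcomm⟩ (σ.ofFn_comp_perm z) w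

theorem mul_left_comm_of_zinbiel {Z : Type*} [Mul Z] [AddCommMagma Z]
    (hZ : ∀ x y z : Z, (x * y + y * x) * z = x * (y * z)) (x y t : Z) :
    x * (y * t) = y * (x * t) := by
  rw [← hZ, ← hZ, add_comm]

theorem stmt6_general
    {Z : Type*} [NonUnitalNonAssocRing Z]
    (hZ : ∀ x y z : Z, (x * y + y * x) * z = x * (y * z))
    {n : ℕ} (z : Fin n → Z) (w : Z) (σ : Equiv.Perm (Fin n)) :
    rprod (z ∘ σ) w = rprod z w :=
  rprod_comp_perm (mul_left_comm_of_zinbiel hZ) z w σ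

/-- In a Zinbiel algebra over a field `k` of characteristic zero, the
right-normed product `r(z₁,…,zₙ,z_{n+1})`, `n ≥ 1`, is invariant under any permutation of
all its factors except the last one. -/
theorem stmt6 {k : Type*} [Field k] [CharZero k]
    {Z : Type*} [NonUnitalNonAssocRing Z] [Module k Z] [SMulCommClass k Z Z] [IsScalarTower k Z Z]
    (hZ : ∀ x y z : Z, (x * y + y * x) * z = x * (y * z))
    {n : ℕ} (hn : 1 ≤ n) (z : Fin n → Z) (w : Z) (σ : Equiv.Perm (Fin n)) :
    rprod (z ∘ σ) w = rprod z w :=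
  stmt6_general hZ z w σ
end

section
/- (Lemma 3) Let Z be a Zinbiel algebra over a field k of characteristic zero, let n ≥ 1, and let z₁, …, zₙ, z_{n+1} ∈ Z. Then ∑_{i=1}^{n} r(z₁, …, ẑᵢ, …, zₙ, zᵢ) · z_{n+1} = r(z₁, …, zₙ, z_{n+1}), where r(z₁, …, ẑᵢ, …, zₙ, zᵢ) denotes the right-normed product of the sequence z₁, …, zₙ with the factor zᵢ deleted from its position and appended at the end. -/
theorem rprod_succ {Z : Type*} [Mul Z] {n : ℕ} (z : Fin (n + 1) → Z) (w : Z) :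
    rprod z w = z 0 * rprod (fun i => z i.succ) w :=
  rfl

theorem rprod_succ_succAbove {Z : Type*} [Mul Z] {m : ℕ} (z : Fin (m + 2) → Z) (i : Fin (m + 1))
    (w : Z) :
    rprod (fun j => z (i.succ.succAbove j)) w = z 0 * rprod (fun j => z (i.succAbove j).succ) w := by
  simp only [rprod, Fin.succ_succAbove_zero, Fin.succ_succAbove_succ]

theorem mul_mul_eq_of_zinbiel {Z : Type*} [NonUnitalNonAssocRing Z]
    (hZ : ∀ x y z : Z, (x * y + y * x) * z = x * (y * z)) (x y u : Z) :
    x * y * u = x * (y * u) - y * x * u :=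
  eq_sub_of_add_eq (by rw [← add_mul, hZ])

theorem stmt7_general
    {Z : Type*} [NonUnitalNonAssocRing Z]
    (hZ : ∀ x y z : Z, (x * y + y * x) * z = x * (y * z))
    {m : ℕ} (z : Fin (m + 1) → Z) (w : Z) :
    ∑ i : Fin (m + 1), (rprod (fun j : Fin m => z (i.succAbove j)) (z i)) * w
      = rprod z w := by
  induction m generalizing w with
  | zero => simp [rprod]
  | succ m ih =>
    have ih_tail := ih (fun j => z j.succ)
    beta_reduce at ih_tail
    rw [Fin.sum_univ_succ]
    simp only [Fin.succAbove_zero, rprod_succ_succAbove]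
    rw [Finset.sum_congr rfl fun i _ => mul_mul_eq_of_zinbiel hZ _ _ w, Finset.sum_sub_distrib,
      ← Finset.mul_sum, ih_tail, ← Finset.sum_mul, ih_tail, rprod_succ]
    abel

/-- Lemma 3: In a Zinbiel algebra over a field `k` of characteristic zero,
`∑_{i=1}^{n} r(z₁,…,ẑᵢ,…,zₙ,zᵢ) · z_{n+1} = r(z₁,…,zₙ,z_{n+1})` for every `n ≥ 1`
(here `n = m + 1`). -/
theorem stmt7 {k : Type*} [Field k] [CharZero k]
    {Z : Type*} [NonUnitalNonAssocRing Z] [Module k Z] [SMulCommClass k Z Z] [IsScalarTower k Z Z]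
    (hZ : ∀ x y z : Z, (x * y + y * x) * z = x * (y * z))
    {m : ℕ} (z : Fin (m + 1) → Z) (w : Z) :
    ∑ i : Fin (m + 1), (rprod (fun j : Fin m => z (i.succAbove j)) (z i)) * w
      = rprod z w :=
  stmt7_general hZ z w
end

section
/- Let Ω be a set, let A be an Ω-algebra over a field k of characteristic zero, and let M be a k-vector space equipped with bilinear maps l_ω : A × M → M and r_ω : M × A → M for each ω ∈ Ω. Let A ⋉ M denote the vector space A ⊕ M with operations (a,u) ∘_ω (b,v) = (a ∘_ω b, l_ω(a,v) + r_ω(u,b)), and let A ⋊ M denote A ⊕ M with the two families of operations (a,u) ⊢_ω (b,v) = (a ∘_ω b, l_ω(a,v)) and (a,u) ⊣_ω (b,v) = (a ∘_ω b, r_ω(u,b)). Equip P₂ ⊗ (A ⋉ M) with the operations (p⊗c) ⊢_ω (q⊗d) = pq ⊗ (c ∘_ω d) and (p⊗c) ⊣_ω (q⊗d) = qp ⊗ (c ∘_ω d). Then the k-linear map φ : A ⋊ M → P₂ ⊗ (A ⋉ M) defined by φ(a,u) = e₁ ⊗ (a,0) + e₂ ⊗ (0,u) is injective and satisfies φ(x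 ⊢_ω y) = φ(x) ⊢_ω φ(y) and φ(x ⊣_ω y) = φ(x) ⊣_ω φ(y) for all x, y ∈ A ⋊ M and all ω ∈ Ω. -/
/-!
`φ` has the linear left inverse `p ⊗ (a, u) ↦ (p₁ a, p₂ u)`. For the operations, expanding
`φ x ⊢ φ y` bilinearly gives four terms; since `e₂ e₁ = e₂ e₂ = 0` in `P₂`, only
`e₁ ⊗ (a, 0) ∘ (b, 0) = e₁ ⊗ (a b, 0)` and `e₂ ⊗ (a, 0) ∘ (0, v) = e₂ ⊗ (0, l a v)` survive,
which is `φ (a b, l a v)`; symmetrically for `⊣` with `r u b`.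
-/

open TensorProduct LinearMap

section PermTensor

variable {R : Type*} [CommSemiring R]

def permProj (A M : Type*) [AddCommMonoid A] [Module R A] [AddCommMonoid M] [Module R M] :
    (R × R) ⊗[R] (A × M) →ₗ[R] A × M :=
  (TensorProduct.lid R A ∘ₗ map (fst R R R) (fst R A M)).prod
    (TensorProduct.lid R M ∘ₗ map (snd R R R) (snd R A M))

variable {A M : Type*} [AddCommMonoid A] [Module R A] [AddCommMonoid M] [Module R M]

@[simp]
theorem permProj_tmul (p : R × R) (c : A × M) :
    permProj A M (p ⊗ₜ[R] c) = (p.1 • c.1, p.2 • c.2) := rfl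

theorem permProj_embed (a : A) (u : M) :
    permProj A M (((1, 0) : R × R) ⊗ₜ[R] ((a, 0) : A × M) + ((0, 1) : R × R) ⊗ₜ[R] (0, u))
      = (a, u) := by
  simp

variable {X : Type*} [AddCommMonoid X] [Module R X]

theorem leftPerm_apply_embed {L : (R × R) ⊗[R] X →ₗ[R] (R × R) ⊗[R] X →ₗ[R] (R × R) ⊗[R] X}
    {μ : X → X → X}
    (hL : ∀ (p q : R × R) (c d : X),
      L (p ⊗ₜ[R] c) (q ⊗ₜ[R] d) = ((p.1 * q.1, p.1 * q.2) : R × R) ⊗ₜ[R] μ c d)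
    (x y x' y' : X) :
    L (((1, 0) : R × R) ⊗ₜ[R] x + ((0, 1) : R × R) ⊗ₜ[R] y)
        (((1, 0) : R × R) ⊗ₜ[R] x' + ((0, 1) : R × R) ⊗ₜ[R] y')
      = ((1, 0) : R × R) ⊗ₜ[R] μ x x' + ((0, 1) : R × R) ⊗ₜ[R] μ x y' := by
  simp only [map_add, LinearMap.add_apply, hL]
  simp [Prod.mk_zero_zero]

theorem rightPerm_apply_embed {L : (R × R) ⊗[R] X →ₗ[R] (R × R) ⊗[R] X →ₗ[R] (R × R) ⊗[R] X}
    {μ : X → X → X}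
    (hL : ∀ (p q : R × R) (c d : X),
      L (p ⊗ₜ[R] c) (q ⊗ₜ[R] d) = ((q.1 * p.1, q.1 * p.2) : R × R) ⊗ₜ[R] μ c d)
    (x y x' y' : X) :
    L (((1, 0) : R × R) ⊗ₜ[R] x + ((0, 1) : R × R) ⊗ₜ[R] y)
        (((1, 0) : R × R) ⊗ₜ[R] x' + ((0, 1) : R × R) ⊗ₜ[R] y')
      = ((1, 0) : R × R) ⊗ₜ[R] μ x x' + ((0, 1) : R × R) ⊗ₜ[R] μ y x' := by
  simp only [map_add, LinearMap.add_apply, hL]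
  simp [Prod.mk_zero_zero]

end PermTensor

theorem stmt9_general {k : Type*} [Field k] {Ω : Type*}
    {A : Type*} [AddCommGroup A] [Module k A]
    (mul : Ω → A →ₗ[k] A →ₗ[k] A)
    {M : Type*} [AddCommGroup M] [Module k M]
    (l : Ω → A →ₗ[k] M →ₗ[k] M) (r : Ω → M →ₗ[k] A →ₗ[k] M)
    -- the operations `⊢_ω` and `⊣_ω` on `P₂ ⊗ (A ⋉ M)`
    (L R : Ω → (k × k) ⊗[k] (A × M) →ₗ[k] (k × k) ⊗[k] (A × M) →ₗ[k] (k × k) ⊗[k] (A × M))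
    (hL : ∀ (ω : Ω) (p q : k × k) (c d : A × M),
      L ω (p ⊗ₜ[k] c) (q ⊗ₜ[k] d)
        = ((p.1 * q.1, p.1 * q.2) : k × k) ⊗ₜ[k]
            ((mul ω c.1 d.1, l ω c.1 d.2 + r ω c.2 d.1) : A × M))
    (hR : ∀ (ω : Ω) (p q : k × k) (c d : A × M),
      R ω (p ⊗ₜ[k] c) (q ⊗ₜ[k] d)
        = ((q.1 * p.1, q.1 * p.2) : k × k) ⊗ₜ[k]
            ((mul ω c.1 d.1, l ω c.1 d.2 + r ω c.2 d.1) : A × M))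
    -- the linear map `φ`
    (φ : (A × M) →ₗ[k] (k × k) ⊗[k] (A × M))
    (hφ : ∀ (a : A) (u : M),
      φ (a, u) = ((1, 0) : k × k) ⊗ₜ[k] ((a, 0) : A × M)
        + ((0, 1) : k × k) ⊗ₜ[k] ((0, u) : A × M)) :
    Function.Injective φ ∧
      ∀ (ω : Ω) (a b : A) (u v : M),
        φ (mul ω a b, l ω a v) = L ω (φ (a, u)) (φ (b, v)) ∧
        φ (mul ω a b, r ω u b) = R ω (φ (a, u)) (φ (b, v)) := by
  refine ⟨fun x y hxy => ?_, fun ω a b u v => ⟨?_, ?_⟩⟩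
  · have hproj : ∀ z : A × M, permProj A M (φ z) = z := fun z => by rw [hφ, permProj_embed]
    rw [← hproj x, hxy, hproj y]
  · rw [hφ, hφ, hφ, leftPerm_apply_embed (hL ω)]
    simp
  · rw [hφ, hφ, hφ, rightPerm_apply_embed (hR ω)]
    simp

/-- For an `Ω`-algebra `A` and an Eilenberg bimodule-like datum
`(M, l_ω, r_ω)`, the linear map `φ : A ⋊ M → P₂ ⊗ (A ⋉ M)`,
`φ(a,u) = e₁ ⊗ (a,0) + e₂ ⊗ (0,u)`, is injective and preserves the operations
`⊢_ω` and `⊣_ω`.  Here `P₂ = k × k` with product `(a,b)(c,d) = (ac, ad)`. -/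
theorem stmt9 {k : Type*} [Field k] [CharZero k] {Ω : Type*}
    {A : Type*} [AddCommGroup A] [Module k A]
    (mul : Ω → A →ₗ[k] A →ₗ[k] A)
    {M : Type*} [AddCommGroup M] [Module k M]
    (l : Ω → A →ₗ[k] M →ₗ[k] M) (r : Ω → M →ₗ[k] A →ₗ[k] M)
    -- the operations `⊢_ω` and `⊣_ω` on `P₂ ⊗ (A ⋉ M)`
    (L R : Ω → (k × k) ⊗[k] (A × M) →ₗ[k] (k × k) ⊗[k] (A × M) →ₗ[k] (k × k) ⊗[k] (A × M))
    (hL : ∀ (ω : Ω) (p q : k × k) (c d : A × M),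
      L ω (p ⊗ₜ[k] c) (q ⊗ₜ[k] d)
        = ((p.1 * q.1, p.1 * q.2) : k × k) ⊗ₜ[k]
            ((mul ω c.1 d.1, l ω c.1 d.2 + r ω c.2 d.1) : A × M))
    (hR : ∀ (ω : Ω) (p q : k × k) (c d : A × M),
      R ω (p ⊗ₜ[k] c) (q ⊗ₜ[k] d)
        = ((q.1 * p.1, q.1 * p.2) : k × k) ⊗ₜ[k]
            ((mul ω c.1 d.1, l ω c.1 d.2 + r ω c.2 d.1) : A × M))
    -- the linear map `φ`
    (φ : (A × M) →ₗ[k] (k × k) ⊗[k] (A × M))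
    (hφ : ∀ (a : A) (u : M),
      φ (a, u) = ((1, 0) : k × k) ⊗ₜ[k] ((a, 0) : A × M)
        + ((0, 1) : k × k) ⊗ₜ[k] ((0, u) : A × M)) :
    Function.Injective φ ∧
      ∀ (ω : Ω) (a b : A) (u v : M),
        φ (mul ω a b, l ω a v) = L ω (φ (a, u)) (φ (b, v)) ∧
        φ (mul ω a b, r ω u b) = R ω (φ (a, u)) (φ (b, v)) :=
  stmt9_general mul l r L R hL hR φ hφ
end

section
/- Let D be a left Leibniz algebra over a field k of characteristic zero. Then there exist a Lie algebra L over k and an injective k-linear map φ : D → P₂ ⊗ L such that φ([a,b]) = φ(a) ⊢ φ(b) for all a, b ∈ D, where P₂ ⊗ L carries the bilinear operation (p⊗x) ⊢ (q⊗y) = pq ⊗ [x,y]. -/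
open scoped TensorProduct

/-- A bundled Lie algebra over `k`. -/
structure BundledLieAlgebra (k : Type) [Field k] where
  carrier : Type
  [isLieRing : LieRing carrier]
  [isLieAlgebra : LieAlgebra k carrier]

attribute [instance] BundledLieAlgebra.isLieRing BundledLieAlgebra.isLieAlgebra

/-!
Let `D` act on `V = D × k` by `ℓ_a (d, c) = ([a, d], 0)` and `u_a (d, c) = (c • a, 0)`.
The left Leibniz identity says exactly that `[ℓ_a, ℓ_b] = ℓ_[a,b]` for the commutator in
`End V`, and `[ℓ_a, u_b] = u_[a,b]` holds for any bilinear bracket. Since in `P₂` we have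
`e₁e₁ = e₁`, `e₁e₂ = e₂` and `e₂ · _ = 0`, the map `a ↦ e₁ ⊗ ℓ_a + e₂ ⊗ u_a` into `P₂ ⊗ End V`
carries `[a, b]` to `φ a ⊢ φ b`; it is injective because `u_a (0, 1) = (a, 0)`.
-/

open LinearMap (fst snd inl)

section PermTensor

variable {R : Type*} [CommRing R]

variable (R) in
-- `(a, b)(c, d) = (ac, ad) = a • (c, d)`
def permMul : (R × R) →ₗ[R] (R × R) →ₗ[R] (R × R) :=
  (fst R R R).smulRight LinearMap.id

variable (L : Type*) [LieRing L] [LieAlgebra R L]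

def permLieMul : (R × R) ⊗[R] L →ₗ[R] (R × R) ⊗[R] L →ₗ[R] (R × R) ⊗[R] L :=
  TensorProduct.map₂ (permMul R) (LinearMap.mk₂ R (⁅·, ·⁆) add_lie smul_lie lie_add lie_smul)

theorem permLieMul_tmul (p q : R × R) (x y : L) :
    permLieMul L (p ⊗ₜ x) (q ⊗ₜ y) = (p.1 * q.1, p.1 * q.2) ⊗ₜ ⁅x, y⁆ := rfl

end PermTensor

section OfAssociative

attribute [local instance] LieRing.ofAssociativeRing

def BundledLieAlgebra.ofAssociative {k : Type} [Field k] (A : Type) [Ring A] [Algebra k A] :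
    BundledLieAlgebra k :=
  ⟨A⟩

variable {R D : Type*} [CommRing R] [AddCommGroup D] [Module R D] (br : D →ₗ[R] D →ₗ[R] D)

def IsLeftLeibniz : Prop :=
  ∀ x y z : D, br x (br y z) = br (br x y) z + br y (br x z)

namespace LeftLeibniz

def leftMul : D →ₗ[R] Module.End R (D × R) where
  toFun a := inl R D R ∘ₗ br a ∘ₗ fst R D R
  map_add' _ _ := by ext <;> simp
  map_smul' _ _ := by ext <;> simp

variable (R D) in
def unitMul : D →ₗ[R] Module.End R (D × R) where
  toFun a := (snd R D R).smulRight (a, 0)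
  map_add' _ _ := by ext <;> simp
  map_smul' _ _ := by ext <;> simp [smul_smul, mul_comm]

@[simp] theorem leftMul_apply (a : D) (x : D × R) : leftMul br a x = (br a x.1, 0) := rfl

@[simp] theorem unitMul_apply (a : D) (x : D × R) : unitMul R D a x = (x.2 • a, 0) := by
  simp [unitMul]

theorem lie_leftMul (hbr : IsLeftLeibniz br) (a b : D) :
    ⁅leftMul br a, leftMul br b⁆ = leftMul br (br a b) := by
  rw [LieRing.of_associative_ring_bracket]
  ext <;> simp [hbr a b]

theorem lie_leftMul_unitMul (a b : D) :
    ⁅leftMul br a, unitMul R D b⁆ = unitMul R D (br a b) := by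
  rw [LieRing.of_associative_ring_bracket]
  ext <;> simp

def embedding : D →ₗ[R] (R × R) ⊗[R] Module.End R (D × R) :=
  TensorProduct.mk R _ _ (1, 0) ∘ₗ leftMul br + TensorProduct.mk R _ _ (0, 1) ∘ₗ unitMul R D

theorem embedding_apply (a : D) :
    embedding br a = (1, 0) ⊗ₜ leftMul br a + (0, 1) ⊗ₜ unitMul R D a := rfl

theorem embedding_injective : Function.Injective (embedding br) := by
  let ψ : (R × R) ⊗[R] Module.End R (D × R) →ₗ[R] D :=
    TensorProduct.lid R D ∘ₗ
      TensorProduct.map (snd R R R) (fst R D R ∘ₗ LinearMap.applyₗ (0, 1))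
  refine Function.LeftInverse.injective (g := ψ) fun a => ?_
  simp [ψ, embedding_apply]

theorem embedding_map_bracket (hbr : IsLeftLeibniz br) (a b : D) :
    embedding br (br a b) = permLieMul _ (embedding br a) (embedding br b) := by
  simp [embedding_apply, permLieMul_tmul, lie_leftMul br hbr, lie_leftMul_unitMul,
    Prod.mk_zero_zero]

end LeftLeibniz
end OfAssociative

theorem stmt11_general {k : Type} [Field k]
    {D : Type} [AddCommGroup D] [Module k D]
    (br : D →ₗ[k] D →ₗ[k] D)
    (hbr : ∀ x y z : D, br x (br y z) = br (br x y) z + br y (br x z)) :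
    ∃ (Lb : BundledLieAlgebra k)
      (m : (k × k) ⊗[k] Lb.carrier →ₗ[k] (k × k) ⊗[k] Lb.carrier →ₗ[k]
        (k × k) ⊗[k] Lb.carrier)
      (φ : D →ₗ[k] (k × k) ⊗[k] Lb.carrier),
      (∀ (p q : k × k) (x y : Lb.carrier),
        m (p ⊗ₜ[k] x) (q ⊗ₜ[k] y) = ((p.1 * q.1, p.1 * q.2) : k × k) ⊗ₜ[k] ⁅x, y⁆) ∧
      Function.Injective φ ∧
      ∀ a b : D, φ (br a b) = m (φ a) (φ b) :=
  ⟨.ofAssociative (Module.End k (D × k)), permLieMul _, LeftLeibniz.embedding br,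
    permLieMul_tmul _, LeftLeibniz.embedding_injective br,
    LeftLeibniz.embedding_map_bracket br hbr⟩

/-- Every left Leibniz algebra `D` over a field `k` of characteristic zero
embeds into `P₂ ⊗ L` for some Lie algebra `L`, where `P₂ ⊗ L` carries the operation
`(p⊗x) ⊢ (q⊗y) = pq ⊗ [x,y]` and `P₂ = k × k` with product `(a,b)(c,d) = (ac, ad)`. -/
theorem stmt11 {k : Type} [Field k] [CharZero k]
    {D : Type} [AddCommGroup D] [Module k D]
    (br : D →ₗ[k] D →ₗ[k] D)
    (hbr : ∀ x y z : D, br x (br y z) = br (br x y) z + br y (br x z)) :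
    ∃ (Lb : BundledLieAlgebra k)
      (m : (k × k) ⊗[k] Lb.carrier →ₗ[k] (k × k) ⊗[k] Lb.carrier →ₗ[k]
        (k × k) ⊗[k] Lb.carrier)
      (φ : D →ₗ[k] (k × k) ⊗[k] Lb.carrier),
      (∀ (p q : k × k) (x y : Lb.carrier),
        m (p ⊗ₜ[k] x) (q ⊗ₜ[k] y) = ((p.1 * q.1, p.1 * q.2) : k × k) ⊗ₜ[k] ⁅x, y⁆) ∧
      Function.Injective φ ∧
      ∀ a b : D, φ (br a b) = m (φ a) (φ b) :=
  stmt11_general br hbr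
end

section
/- Let Z be a Zinbiel algebra and D a left Leibniz algebra over a field k of characteristic zero. Then the tensor product Z ⊗ D equipped with the bilinear bracket [z ⊗ a, w ⊗ b] = zw ⊗ [a,b] − wz ⊗ [b,a] is a Lie algebra over k, i.e. the bracket is alternating and satisfies the Jacobi identity. -/
/-!
On pure tensors the bracket is antisymmetric by inspection, and the Jacobi identity is a finite
computation: expand with the left Leibniz rule `[[a,c],e] = [a,[c,e]] - [c,[a,e]]` and the two
Zinbiel consequences `(yx)z = x(yz) - (xy)z` and `x(yz) = y(xz)`, after which everything cancels.
Both identities are multilinear, so they extend from pure tensors to all of `Z ⊗ D`; for the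
Jacobi identity this only needs linearity in the last argument together with cyclic invariance.
-/

open scoped TensorProduct

section Zinbiel

variable {Z : Type*} [NonUnitalNonAssocRing Z]

theorem zinbiel_mul_mul_swap (hZ : ∀ x y z : Z, (x * y + y * x) * z = x * (y * z))
    (x y z : Z) : (y * x) * z = x * (y * z) - (x * y) * z :=
  eq_sub_of_add_eq' (by rw [← add_mul, hZ])

theorem zinbiel_mul_left_comm (hZ : ∀ x y z : Z, (x * y + y * x) * z = x * (y * z))
    (x y z : Z) : x * (y * z) = y * (x * z) := by
  rw [← hZ x y z, ← hZ y x z, add_comm]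

end Zinbiel

theorem leibniz_bracket_bracket {R D : Type*} [CommSemiring R] [AddCommGroup D] [Module R D]
    {br : D →ₗ[R] D →ₗ[R] D} (hbr : ∀ x y z : D, br x (br y z) = br (br x y) z + br y (br x z))
    (x y z : D) : br (br x y) z = br x (br y z) - br y (br x z) :=
  eq_sub_of_add_eq (hbr x y z).symm

namespace TensorProduct

variable {R M N : Type*} [CommRing R] [AddCommGroup M] [Module R M] [AddCommGroup N] [Module R N]
  (b : M ⊗[R] N →ₗ[R] M ⊗[R] N →ₗ[R] M ⊗[R] N)

def jacobiator (x y : M ⊗[R] N) : M ⊗[R] N →ₗ[R] M ⊗[R] N :=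
  b (b x y) + b.flip x ∘ₗ b y + b.flip y ∘ₗ b.flip x

theorem jacobiator_apply (x y z : M ⊗[R] N) :
    jacobiator b x y z = b (b x y) z + b (b y z) x + b (b z x) y :=
  rfl

theorem jacobiator_apply_cycle (x y z : M ⊗[R] N) :
    jacobiator b x y z = jacobiator b z x y := by
  simp only [jacobiator_apply]
  abel

theorem jacobi_of_tmul
    (h : ∀ (m₁ m₂ m₃ : M) (n₁ n₂ n₃ : N), jacobiator b (m₁ ⊗ₜ n₁) (m₂ ⊗ₜ n₂) (m₃ ⊗ₜ n₃) = 0)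
    (x y z : M ⊗[R] N) : b (b x y) z + b (b y z) x + b (b z x) y = 0 := by
  have pure_pure : ∀ m₁ n₁ m₂ n₂, jacobiator b (m₁ ⊗ₜ n₁) (m₂ ⊗ₜ[R] n₂) = 0 :=
    fun m₁ n₁ m₂ n₂ => ext' fun m₃ n₃ => h m₁ m₂ m₃ n₁ n₂ n₃
  have pure_any : ∀ m₁ n₁ y, jacobiator b (m₁ ⊗ₜ n₁) y = 0 := fun m₁ n₁ y =>
    ext' fun m₂ n₂ => by
      rw [jacobiator_apply_cycle, pure_pure, LinearMap.zero_apply, LinearMap.zero_apply]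
  have any_any : jacobiator b x y = 0 :=
    ext' fun m n => by
      rw [jacobiator_apply_cycle, pure_any, LinearMap.zero_apply, LinearMap.zero_apply]
  rw [← jacobiator_apply, any_any, LinearMap.zero_apply]

theorem bracket_self_eq_zero_of_tmul (hself : ∀ (m : M) (n : N), b (m ⊗ₜ n) (m ⊗ₜ n) = 0)
    (hanti : ∀ (m₁ m₂ : M) (n₁ n₂ : N), b (m₁ ⊗ₜ n₁) (m₂ ⊗ₜ n₂) + b (m₂ ⊗ₜ n₂) (m₁ ⊗ₜ n₁) = 0)
    (x : M ⊗[R] N) : b x x = 0 := by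
  have hflip : b + b.flip = 0 := ext' fun m₁ n₁ => ext' fun m₂ n₂ => hanti m₁ m₂ n₁ n₂
  induction x using TensorProduct.induction_on with
  | zero => simp
  | tmul m n => exact hself m n
  | add u v hu hv =>
    have huv : b v u + b u v = 0 := LinearMap.congr_fun (LinearMap.congr_fun hflip v) u
    simpa only [map_add, LinearMap.add_apply, hu, hv, zero_add, add_zero] using huv

end TensorProduct

theorem jacobiator_tmul_eq_zero_of_zinbiel_of_leibniz {k Z D : Type*} [CommRing k]
    [NonUnitalNonAssocRing Z] [Module k Z] [AddCommGroup D] [Module k D]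
    {br : D →ₗ[k] D →ₗ[k] D} {b : Z ⊗[k] D →ₗ[k] Z ⊗[k] D →ₗ[k] Z ⊗[k] D}
    (hZ : ∀ x y z : Z, (x * y + y * x) * z = x * (y * z))
    (hbr : ∀ x y z : D, br x (br y z) = br (br x y) z + br y (br x z))
    (hb : ∀ (z w : Z) (a c : D),
      b (z ⊗ₜ[k] a) (w ⊗ₜ[k] c) = (z * w) ⊗ₜ[k] br a c - (w * z) ⊗ₜ[k] br c a)
    (x y z : Z) (a c e : D) :
    TensorProduct.jacobiator b (x ⊗ₜ a) (y ⊗ₜ c) (z ⊗ₜ e) = 0 := by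
  simp only [TensorProduct.jacobiator_apply, hb, map_sub, LinearMap.sub_apply,
    leibniz_bracket_bracket hbr]
  rw [zinbiel_mul_mul_swap hZ x y z, zinbiel_mul_mul_swap hZ y z x, zinbiel_mul_mul_swap hZ z x y,
    zinbiel_mul_left_comm hZ z x y, zinbiel_mul_left_comm hZ z y x, zinbiel_mul_left_comm hZ y x z]
  simp only [TensorProduct.tmul_sub, TensorProduct.sub_tmul]
  abel

theorem stmt13_general {k : Type*} [Field k]
    {Z : Type*} [NonUnitalNonAssocRing Z] [Module k Z]
    (hZ : ∀ x y z : Z, (x * y + y * x) * z = x * (y * z))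
    {D : Type*} [AddCommGroup D] [Module k D]
    (br : D →ₗ[k] D →ₗ[k] D)
    (hbr : ∀ x y z : D, br x (br y z) = br (br x y) z + br y (br x z))
    (b : Z ⊗[k] D →ₗ[k] Z ⊗[k] D →ₗ[k] Z ⊗[k] D)
    (hb : ∀ (z w : Z) (a c : D),
      b (z ⊗ₜ[k] a) (w ⊗ₜ[k] c) = (z * w) ⊗ₜ[k] br a c - (w * z) ⊗ₜ[k] br c a) :
    (∀ x : Z ⊗[k] D, b x x = 0) ∧
    (∀ x y z : Z ⊗[k] D, b (b x y) z + b (b y z) x + b (b z x) y = 0) := by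
  refine ⟨TensorProduct.bracket_self_eq_zero_of_tmul b (fun z a => ?_) (fun z w a c => ?_),
    TensorProduct.jacobi_of_tmul b fun x y z a c e =>
      jacobiator_tmul_eq_zero_of_zinbiel_of_leibniz hZ hbr hb x y z a c e⟩
  · rw [hb, sub_self]
  · rw [hb, hb]
    abel

/-- For a Zinbiel algebra `Z` and a left Leibniz algebra `D` over a field
`k` of characteristic zero, the bracket `[z⊗a, w⊗b] = zw ⊗ [a,b] − wz ⊗ [b,a]` makes
`Z ⊗ D` a Lie algebra: the bracket is alternating and satisfies the Jacobi identity. -/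
theorem stmt13 {k : Type*} [Field k] [CharZero k]
    {Z : Type*} [NonUnitalNonAssocRing Z] [Module k Z] [SMulCommClass k Z Z] [IsScalarTower k Z Z]
    (hZ : ∀ x y z : Z, (x * y + y * x) * z = x * (y * z))
    {D : Type*} [AddCommGroup D] [Module k D]
    (br : D →ₗ[k] D →ₗ[k] D)
    (hbr : ∀ x y z : D, br x (br y z) = br (br x y) z + br y (br x z))
    (b : Z ⊗[k] D →ₗ[k] Z ⊗[k] D →ₗ[k] Z ⊗[k] D)
    (hb : ∀ (z w : Z) (a c : D),
      b (z ⊗ₜ[k] a) (w ⊗ₜ[k] c) = (z * w) ⊗ₜ[k] br a c - (w * z) ⊗ₜ[k] br c a) :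
    (∀ x : Z ⊗[k] D, b x x = 0) ∧
    (∀ x y z : Z ⊗[k] D, b (b x y) z + b (b y z) x + b (b z x) y = 0) :=
  stmt13_general hZ br hbr b hb
end
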